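/- arXiv:1310.0655 — 5 statements merged into one kernel-verified Lean document; each statement's English description precedes it below -/
import Mathlib

section
/- Let X = (X_1, ..., X_N) be a vector of N mutually independent random variables, let f(X) be a square-integrable R^n-valued random vector, and let (f_J(X_J))_{J subset of {1,...,N}} be its ANOVA decomposition, i.e., each f_J(X_J) is sigma(X_J)-measurable and square-integrable with E(f_J(X_J) | X_{~i}) = 0 for every i in J, and f(X) = sum over J of f_J(X_J) almost surely. Then for any two distinct subsets J and K of {1,...,N} and any coordinate indices l, m in {1,...,n}, the l-th coordinate of f_J(X_J) and the m-th coordinate of f_K(X_K) are orthogonal in L^2, i.e., E[f_{J,l}(X_J) f_{K,m}(X_K)] = 0. -/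
open MeasureTheory ProbabilityTheory

/-- `F` is an ANOVA decomposition of `fX` with respect to the random variables `X i`:
each component `F J` is (a.e.) measurable with respect to the σ-algebra generated by the
subvector `X_J`, is square-integrable, has vanishing conditional expectation given `X_{~i}`
for every `i ∈ J`, and the components sum to `fX` almost surely. -/
def IsANOVADecomp {Ω : Type*} [MeasurableSpace Ω] (μ : Measure Ω)
    {N n : ℕ} {𝒳 : Fin N → Type*} [∀ i, MeasurableSpace (𝒳 i)]
    (X : ∀ i, Ω → 𝒳 i) (fX : Ω → EuclideanSpace ℝ (Fin n))
    (F : Finset (Fin N) → Ω → EuclideanSpace ℝ (Fin n)) : Prop :=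
  (∀ J : Finset (Fin N),
      AEStronglyMeasurable[⨆ i ∈ J, MeasurableSpace.comap (X i) inferInstance] (F J) μ)
  ∧ (∀ J : Finset (Fin N), MemLp (F J) 2 μ)
  ∧ (∀ J : Finset (Fin N), ∀ i ∈ J,
      μ[F J | ⨆ (j : Fin N) (_ : j ≠ i), MeasurableSpace.comap (X j) inferInstance] =ᵐ[μ] 0)
  ∧ fX =ᵐ[μ] fun ω => ∑ J : Finset (Fin N), F J ω

/-! If `J ≠ K`, one of them, say `J`, contains an index `i ∉ K`. Then `F K` is a function of
`X_{~i}` while `F J` has zero conditional expectation given `X_{~i}`, so by the pull-out property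
`E[B (F J) (F K)] = E[B (E[F J | X_{~i}]) (F K)] = 0` for every continuous bilinear `B`; the
product of two coordinates is such a `B`. -/

namespace MeasureTheory

theorem integral_bilin_eq_zero_of_condExp_eq_zero {Ω E F G : Type*} {m mΩ : MeasurableSpace Ω}
    {μ : Measure Ω} [NormedAddCommGroup E] [NormedSpace ℝ E] [CompleteSpace E]
    [NormedAddCommGroup F] [NormedSpace ℝ F] [NormedAddCommGroup G] [NormedSpace ℝ G]
    [CompleteSpace G] (hm : m ≤ mΩ) [SigmaFinite (μ.trim hm)] (B : E →L[ℝ] F →L[ℝ] G)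
    {f : Ω → E} {g : Ω → F} (hf : Integrable f μ) (hf0 : μ[f | m] =ᵐ[μ] 0)
    (hg : AEStronglyMeasurable[m] g μ) (hfg : Integrable (fun ω ↦ B (f ω) (g ω)) μ) :
    ∫ ω, B (f ω) (g ω) ∂μ = 0 :=
  calc ∫ ω, B (f ω) (g ω) ∂μ = ∫ ω, μ[fun ω ↦ B (f ω) (g ω) | m] ω ∂μ :=
        (integral_condExp hm).symm
    _ = ∫ ω, B (μ[f | m] ω) (g ω) ∂μ :=
        integral_congr_ae (condExp_bilin_of_aestronglyMeasurable_right B hg hfg hf)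
    _ = ∫ _, (0 : G) ∂μ := integral_congr_ae (hf0.mono fun ω hω ↦ by simp [hω])
    _ = 0 := integral_zero Ω G

end MeasureTheory

section ANOVA

variable {Ω : Type*} [MeasurableSpace Ω] {μ : Measure Ω} [IsFiniteMeasure μ]
  {N n : ℕ} {𝒳 : Fin N → Type*} [∀ i, MeasurableSpace (𝒳 i)] {X : ∀ i, Ω → 𝒳 i}
  {fX : Ω → EuclideanSpace ℝ (Fin n)} {F : Finset (Fin N) → Ω → EuclideanSpace ℝ (Fin n)}
  {G : Type*} [NormedAddCommGroup G] [NormedSpace ℝ G] [CompleteSpace G]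

theorem IsANOVADecomp.integral_bilin_eq_zero_of_mem_of_notMem (hF : IsANOVADecomp μ X fX F)
    (hX : ∀ i, Measurable (X i))
    (B : EuclideanSpace ℝ (Fin n) →L[ℝ] EuclideanSpace ℝ (Fin n) →L[ℝ] G)
    {J K : Finset (Fin N)} {i : Fin N} (hiJ : i ∈ J) (hiK : i ∉ K) :
    ∫ ω, B (F J ω) (F K ω) ∂μ = 0 := by
  obtain ⟨hmeas, hL2, hcond, -⟩ := hF
  have hle : (⨆ (j : Fin N) (_ : j ≠ i), MeasurableSpace.comap (X j) inferInstance) ≤ ‹_› :=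
    iSup₂_le fun j _ ↦ (hX j).comap_le
  have hK : (⨆ j ∈ K, MeasurableSpace.comap (X j) inferInstance) ≤
      ⨆ (j : Fin N) (_ : j ≠ i), MeasurableSpace.comap (X j) inferInstance :=
    biSup_mono fun j hjK hji ↦ hiK (hji ▸ hjK)
  exact integral_bilin_eq_zero_of_condExp_eq_zero hle B ((hL2 J).integrable one_le_two)
    (hcond J i hiJ) ((hmeas K).mono hK)
    ((B.memLp_of_bilin 1 (hL2 J) (hL2 K)).integrable le_rfl)

theorem IsANOVADecomp.integral_bilin_eq_zero (hF : IsANOVADecomp μ X fX F)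
    (hX : ∀ i, Measurable (X i))
    (B : EuclideanSpace ℝ (Fin n) →L[ℝ] EuclideanSpace ℝ (Fin n) →L[ℝ] G)
    {J K : Finset (Fin N)} (hJK : J ≠ K) :
    ∫ ω, B (F J ω) (F K ω) ∂μ = 0 := by
  by_cases hJ : J ⊆ K
  · obtain ⟨i, hiK, hiJ⟩ := Finset.not_subset.mp fun hK ↦ hJK (hJ.antisymm hK)
    exact hF.integral_bilin_eq_zero_of_mem_of_notMem hX B.flip hiK hiJ
  · obtain ⟨i, hiJ, hiK⟩ := Finset.not_subset.mp hJ
    exact hF.integral_bilin_eq_zero_of_mem_of_notMem hX B hiJ hiK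

end ANOVA

theorem anova_components_orthogonal_general
    {Ω : Type*} [MeasurableSpace Ω] (μ : Measure Ω) [IsProbabilityMeasure μ]
    {N n : ℕ} {𝒳 : Fin N → Type*} [∀ i, MeasurableSpace (𝒳 i)]
    (X : ∀ i, Ω → 𝒳 i) (hX : ∀ i, Measurable (X i))
    (f : (∀ i, 𝒳 i) → EuclideanSpace ℝ (Fin n))
    (F : Finset (Fin N) → Ω → EuclideanSpace ℝ (Fin n))
    (hF : IsANOVADecomp μ X (fun ω => f (fun i => X i ω)) F) :
    ∀ J K : Finset (Fin N), J ≠ K → ∀ l m : Fin n,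
      ∫ ω, F J ω l * F K ω m ∂μ = 0 := fun _ _ hJK l m ↦
  hF.integral_bilin_eq_zero hX
    ((ContinuousLinearMap.mul ℝ ℝ).bilinearComp (EuclideanSpace.proj l) (EuclideanSpace.proj m))
    hJK

/-- Distinct components of the ANOVA decomposition are orthogonal in `L²`, coordinatewise:
for `J ≠ K` and any coordinates `l, m`, `E[f_{J,l}(X_J) · f_{K,m}(X_K)] = 0`. -/
theorem anova_components_orthogonal
    {Ω : Type*} [MeasurableSpace Ω] (μ : Measure Ω) [IsProbabilityMeasure μ]
    {N n : ℕ} {𝒳 : Fin N → Type*} [∀ i, MeasurableSpace (𝒳 i)]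
    (X : ∀ i, Ω → 𝒳 i) (hX : ∀ i, Measurable (X i))
    (hindep : iIndepFun X μ)
    (f : (∀ i, 𝒳 i) → EuclideanSpace ℝ (Fin n)) (hf : Measurable f)
    (hf2 : MemLp (fun ω => f (fun i => X i ω)) 2 μ)
    (F : Finset (Fin N) → Ω → EuclideanSpace ℝ (Fin n))
    (hF : IsANOVADecomp μ X (fun ω => f (fun i => X i ω)) F) :
    ∀ J K : Finset (Fin N), J ≠ K → ∀ l m : Fin n,
      ∫ ω, F J ω l * F K ω m ∂μ = 0 :=
  anova_components_orthogonal_general μ X hX f F hF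
end

section
/- Let X = (X_1, ..., X_N) be a vector of N mutually independent random variables, let f(X) be a square-integrable R^n-valued random vector, and let (f_J(X_J))_{J subset of {1,...,N}} be its ANOVA decomposition. Then the generalized variance of f(X) decomposes as a sum over all subsets: Var(f(X)) = sum over all J subset of {1,...,N} of Var(f_J(X_J)), where Var(Z) = E[|Z - E(Z)|^2] with |.| the Euclidean norm on R^n. -/
open MeasureTheory ProbabilityTheory

/-- The generalized variance `Var(Z) = E[‖Z - E Z‖²]` (Euclidean norm on `ℝⁿ`). -/
noncomputable def gVar {Ω : Type*} [MeasurableSpace Ω] {n : ℕ}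
    (μ : Measure Ω) (Z : Ω → EuclideanSpace ℝ (Fin n)) : ℝ :=
  ∫ ω, ‖Z ω - ∫ ω', Z ω' ∂μ‖ ^ 2 ∂μ

/-!
Centre each component: `f(X) - E f(X) = ∑_J (f_J - E f_J)`. The centred components are
pairwise orthogonal in `L²`: if `J ≠ K`, some `i` lies in one of them, say `J`, but not in `K`;
then `f_J` has mean zero and `f_K - E f_K` is `σ(X_{~i})`-measurable, so
`E⟪f_J, f_K - E f_K⟫ = E⟪E(f_J | X_{~i}), f_K - E f_K⟫ = 0`.
The theorem is then Pythagoras in `L²`.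
-/

open scoped RealInnerProductSpace

section Orthogonality

variable {Ω E : Type*} {m m0 : MeasurableSpace Ω} {μ : Measure Ω}

lemma integral_eq_zero_of_condExp_ae_eq_zero [NormedAddCommGroup E] [NormedSpace ℝ E]
    [CompleteSpace E] [IsFiniteMeasure μ] (hm : m ≤ m0) {f : Ω → E}
    (hf : μ[f|m] =ᵐ[μ] 0) :
    ∫ ω, f ω ∂μ = 0 := by
  rw [← integral_condExp hm, integral_congr_ae hf]
  exact integral_zero Ω E

variable [NormedAddCommGroup E] [InnerProductSpace ℝ E]

lemma MeasureTheory.MemLp.integrable_inner {f g : Ω → E} (hf : MemLp f 2 μ)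
    (hg : MemLp g 2 μ) :
    Integrable (fun ω => ⟪f ω, g ω⟫) μ :=
  (L2.integrable_inner (𝕜 := ℝ) hf.toLp hg.toLp).congr <| by
    filter_upwards [hf.coeFn_toLp, hg.coeFn_toLp] with ω hfω hgω
    rw [hfω, hgω]

lemma integral_inner_eq_zero_of_condExp_ae_eq_zero [CompleteSpace E] [IsFiniteMeasure μ]
    (hm : m ≤ m0) {f g : Ω → E} (hf : MemLp f 2 μ) (hg : MemLp g 2 μ)
    (hgm : AEStronglyMeasurable[m] g μ) (hf0 : μ[f|m] =ᵐ[μ] 0) :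
    ∫ ω, ⟪f ω, g ω⟫ ∂μ = 0 := by
  have hproj : (condExpL2 E ℝ hm hf.toLp : Ω → E) =ᵐ[μ] 0 :=
    (hf.condExpL2_ae_eq_condExp hm).trans hf0
  calc ∫ ω, ⟪f ω, g ω⟫ ∂μ = ⟪hf.toLp, hg.toLp⟫ := by
        rw [L2.inner_def]
        refine integral_congr_ae ?_
        filter_upwards [hf.coeFn_toLp, hg.coeFn_toLp] with ω hfω hgω
        rw [hfω, hgω]
    _ = ⟪(condExpL2 E ℝ hm hf.toLp : Ω →₂[μ] E), hg.toLp⟫ :=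
        (inner_condExpL2_eq_inner_fun hm _ _ (hgm.congr hg.coeFn_toLp.symm)).symm
    _ = 0 := by
        rw [L2.inner_def]
        refine integral_eq_zero_of_ae ?_
        filter_upwards [hproj] with ω hω
        simp [hω]

lemma integral_norm_sum_sq_of_integral_inner_eq_zero {ι : Type*} (s : Finset ι)
    {G : ι → Ω → E} (hG : ∀ i ∈ s, MemLp (G i) 2 μ)
    (horth : ∀ i ∈ s, ∀ j ∈ s, i ≠ j → ∫ ω, ⟪G i ω, G j ω⟫ ∂μ = 0) :
    ∫ ω, ‖∑ i ∈ s, G i ω‖ ^ 2 ∂μ = ∑ i ∈ s, ∫ ω, ‖G i ω‖ ^ 2 ∂μ := by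
  have hint : ∀ i ∈ s, ∀ j ∈ s, Integrable (fun ω => ⟪G i ω, G j ω⟫) μ :=
    fun i hi j hj => (hG i hi).integrable_inner (hG j hj)
  calc ∫ ω, ‖∑ i ∈ s, G i ω‖ ^ 2 ∂μ
        = ∫ ω, ∑ i ∈ s, ∑ j ∈ s, ⟪G i ω, G j ω⟫ ∂μ := by
        simp_rw [← real_inner_self_eq_norm_sq, sum_inner, inner_sum]
    _ = ∑ i ∈ s, ∑ j ∈ s, ∫ ω, ⟪G i ω, G j ω⟫ ∂μ := by
        rw [integral_finsetSum _ fun i hi => integrable_finsetSum _ fun j hj => hint i hi j hj]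
        exact Finset.sum_congr rfl fun i hi => integral_finsetSum _ fun j hj => hint i hi j hj
    _ = ∑ i ∈ s, ∫ ω, ⟪G i ω, G i ω⟫ ∂μ :=
        Finset.sum_congr rfl fun i hi =>
          Finset.sum_eq_single_of_mem i hi fun j hj hji => horth i hi j hj hji.symm
    _ = ∑ i ∈ s, ∫ ω, ‖G i ω‖ ^ 2 ∂μ := by
        simp_rw [real_inner_self_eq_norm_sq]

end Orthogonality

lemma iSup₂_comap_le {Ω ι : Type*} {m0 : MeasurableSpace Ω} {𝒳 : ι → Type*}
    [∀ i, MeasurableSpace (𝒳 i)] {X : ∀ i, Ω → 𝒳 i} (hX : ∀ i, Measurable (X i))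
    (p : ι → Prop) : (⨆ (j) (_ : p j), MeasurableSpace.comap (X j) inferInstance) ≤ m0 :=
  iSup₂_le fun j _ => (hX j).comap_le

lemma gVar_eq_integral_norm_sum_sub_integral_sq {Ω ι : Type*} [MeasurableSpace Ω]
    {μ : Measure Ω} {n : ℕ} (s : Finset ι) {Z : Ω → EuclideanSpace ℝ (Fin n)}
    {G : ι → Ω → EuclideanSpace ℝ (Fin n)} (hG : ∀ i ∈ s, Integrable (G i) μ)
    (hZ : Z =ᵐ[μ] fun ω => ∑ i ∈ s, G i ω) :
    gVar μ Z = ∫ ω, ‖∑ i ∈ s, (G i ω - ∫ ω', G i ω' ∂μ)‖ ^ 2 ∂μ := by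
  have hmean : ∫ ω, Z ω ∂μ = ∑ i ∈ s, ∫ ω, G i ω ∂μ := by
    rw [integral_congr_ae hZ, integral_finsetSum _ hG]
  refine integral_congr_ae ?_
  filter_upwards [hZ] with ω hω
  rw [hmean, hω, Finset.sum_sub_distrib]

namespace IsANOVADecomp

variable {Ω : Type*} [MeasurableSpace Ω] {μ : Measure Ω} [IsFiniteMeasure μ]
  {N n : ℕ} {𝒳 : Fin N → Type*} [∀ i, MeasurableSpace (𝒳 i)] {X : ∀ i, Ω → 𝒳 i}
  {fX : Ω → EuclideanSpace ℝ (Fin n)}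
  {F : Finset (Fin N) → Ω → EuclideanSpace ℝ (Fin n)}

lemma integral_eq_zero (hX : ∀ i, Measurable (X i)) (hF : IsANOVADecomp μ X fX F)
    {J : Finset (Fin N)} (hJ : J.Nonempty) : ∫ ω, F J ω ∂μ = 0 :=
  let ⟨i, hi⟩ := hJ
  integral_eq_zero_of_condExp_ae_eq_zero (iSup₂_comap_le hX _) (hF.2.2.1 J i hi)

lemma integral_inner_centered_eq_zero_of_mem_of_notMem (hX : ∀ i, Measurable (X i))
    (hF : IsANOVADecomp μ X fX F) {J K : Finset (Fin N)} {i : Fin N} (hiJ : i ∈ J)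
    (hiK : i ∉ K) :
    ∫ ω, ⟪F J ω - ∫ ω', F J ω' ∂μ, F K ω - ∫ ω', F K ω' ∂μ⟫ ∂μ = 0 := by
  rw [hF.integral_eq_zero hX ⟨i, hiJ⟩]
  simp only [sub_zero]
  have hKm : AEStronglyMeasurable[⨆ (j) (_ : j ≠ i), MeasurableSpace.comap (X j) inferInstance]
      (F K) μ :=
    (hF.1 K).mono (biSup_mono fun j hj => ne_of_mem_of_not_mem hj hiK)
  exact integral_inner_eq_zero_of_condExp_ae_eq_zero (iSup₂_comap_le hX _) (hF.2.1 J)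
    ((hF.2.1 K).sub (memLp_const _)) (hKm.sub aestronglyMeasurable_const) (hF.2.2.1 J i hiJ)

lemma integral_inner_centered_eq_zero (hX : ∀ i, Measurable (X i))
    (hF : IsANOVADecomp μ X fX F) {J K : Finset (Fin N)} (hJK : J ≠ K) :
    ∫ ω, ⟪F J ω - ∫ ω', F J ω' ∂μ, F K ω - ∫ ω', F K ω' ∂μ⟫ ∂μ = 0 := by
  by_cases hJsubK : J ⊆ K
  · obtain ⟨i, hiK, hiJ⟩ := Finset.not_subset.mp fun hKsubJ => hJK (hJsubK.antisymm hKsubJ)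
    rw [← hF.integral_inner_centered_eq_zero_of_mem_of_notMem hX hiK hiJ]
    exact integral_congr_ae (.of_forall fun ω => real_inner_comm _ _)
  · obtain ⟨i, hiJ, hiK⟩ := Finset.not_subset.mp hJsubK
    exact hF.integral_inner_centered_eq_zero_of_mem_of_notMem hX hiJ hiK

end IsANOVADecomp

theorem anova_variance_decomposition_general
    {Ω : Type*} [MeasurableSpace Ω] (μ : Measure Ω) [IsProbabilityMeasure μ]
    {N n : ℕ} {𝒳 : Fin N → Type*} [∀ i, MeasurableSpace (𝒳 i)]
    (X : ∀ i, Ω → 𝒳 i) (hX : ∀ i, Measurable (X i))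
    (f : (∀ i, 𝒳 i) → EuclideanSpace ℝ (Fin n))
    (F : Finset (Fin N) → Ω → EuclideanSpace ℝ (Fin n))
    (hF : IsANOVADecomp μ X (fun ω => f (fun i => X i ω)) F) :
    gVar μ (fun ω => f (fun i => X i ω)) = ∑ J : Finset (Fin N), gVar μ (F J) := by
  obtain ⟨-, hL2, -, hsum⟩ := id hF
  rw [gVar_eq_integral_norm_sum_sub_integral_sq _ (fun J _ => (hL2 J).integrable one_le_two) hsum,
    integral_norm_sum_sq_of_integral_inner_eq_zero
      (G := fun J ω => F J ω - ∫ ω', F J ω' ∂μ) _ (fun J _ => (hL2 J).sub (memLp_const _))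
      fun J _ K _ hJK => hF.integral_inner_centered_eq_zero hX hJK]
  rfl

/-- ANOVA decomposition of the generalized variance: the variance of `f(X)` is the sum of
the variances of its ANOVA components. -/
theorem anova_variance_decomposition
    {Ω : Type*} [MeasurableSpace Ω] (μ : Measure Ω) [IsProbabilityMeasure μ]
    {N n : ℕ} {𝒳 : Fin N → Type*} [∀ i, MeasurableSpace (𝒳 i)]
    (X : ∀ i, Ω → 𝒳 i) (hX : ∀ i, Measurable (X i))
    (hindep : iIndepFun X μ)
    (f : (∀ i, 𝒳 i) → EuclideanSpace ℝ (Fin n)) (hf : Measurable f)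
    (hf2 : MemLp (fun ω => f (fun i => X i ω)) 2 μ)
    (F : Finset (Fin N) → Ω → EuclideanSpace ℝ (Fin n))
    (hF : IsANOVADecomp μ X (fun ω => f (fun i => X i ω)) F) :
    gVar μ (fun ω => f (fun i => X i ω)) = ∑ J : Finset (Fin N), gVar μ (F J) :=
  anova_variance_decomposition_general μ X hX f F hF
end

section
/- Let X = (X_1, ..., X_N) be a vector of N mutually independent random variables, let f(X) be a square-integrable R^n-valued random vector, and let (f_K(X_K))_{K subset of {1,...,N}} be its ANOVA decomposition. Then for every subset J of {1,...,N}, the coordinatewise conditional expectation of f(X) given X_J equals the partial sum of ANOVA components over subsets of J: E(f(X) | X_J) = sum over K subset of J of f_K(X_K), almost surely. -/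
open MeasureTheory ProbabilityTheory

/-!
Condition the ANOVA expansion `f(X) = ∑_K f_K(X_K)` on `X_J` term by term. A component with
`K ⊆ J` is `σ(X_J)`-measurable, so it is left unchanged. A component with some `i ∈ K \ J`
vanishes: `σ(X_J) ≤ σ(X_{~i})`, and by the tower property its conditional expectation given
`X_J` factors through its conditional expectation given `X_{~i}`, which is zero.
-/

theorem Filter.EventuallyEq.finsetSum {α ι M : Type*} [AddCommMonoid M] {l : Filter α}
    {s : Finset ι} {f g : ι → α → M} (h : ∀ i ∈ s, f i =ᶠ[l] g i) :
    ∑ i ∈ s, f i =ᶠ[l] ∑ i ∈ s, g i := by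
  filter_upwards [(Filter.eventually_all_finset s).2 h] with x hx
  simp only [Finset.sum_apply]
  exact Finset.sum_congr rfl hx

namespace MeasureTheory

variable {Ω E ι : Type*} {m₀ : MeasurableSpace Ω} {μ : Measure Ω}
  [NormedAddCommGroup E] [NormedSpace ℝ E] [CompleteSpace E]

theorem condExp_ae_eq_zero_of_le {m₁ m₂ : MeasurableSpace Ω} {f : Ω → E} (h₁₂ : m₁ ≤ m₂)
    (h₂ : m₂ ≤ m₀) [SigmaFinite (μ.trim h₂)] (hf : μ[f | m₂] =ᵐ[μ] 0) :
    μ[f | m₁] =ᵐ[μ] 0 :=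
  calc μ[f | m₁] =ᵐ[μ] μ[μ[f | m₂] | m₁] := (condExp_condExp_of_le h₁₂ h₂).symm
    _ =ᵐ[μ] μ[0 | m₁] := condExp_congr_ae hf
    _ = 0 := condExp_zero

theorem condExp_finsetSum_ae_eq_sum_filter {m : MeasurableSpace Ω} {s : Finset ι}
    {f : ι → Ω → E} (p : ι → Prop) [DecidablePred p] (hf : ∀ i ∈ s, Integrable (f i) μ)
    (hp : ∀ i ∈ s, p i → μ[f i | m] =ᵐ[μ] f i)
    (hnp : ∀ i ∈ s, ¬p i → μ[f i | m] =ᵐ[μ] 0) :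
    μ[∑ i ∈ s, f i | m] =ᵐ[μ] ∑ i ∈ s with p i, f i := by
  rw [Finset.sum_filter]
  refine (condExp_finsetSum hf m).trans (Filter.EventuallyEq.finsetSum fun i hi => ?_)
  split_ifs with h
  exacts [hp i hi h, hnp i hi h]

section biSup

variable [IsFiniteMeasure μ] {m : ι → MeasurableSpace Ω}

theorem condExp_biSup_ae_eq_self_of_subset (hm : ∀ i, m i ≤ m₀) {J K : Finset ι}
    (hKJ : K ⊆ J) {f : Ω → E} (hf : AEStronglyMeasurable[⨆ i ∈ K, m i] f μ)
    (hfi : Integrable f μ) :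
    μ[f | ⨆ i ∈ J, m i] =ᵐ[μ] f :=
  condExp_of_aestronglyMeasurable' (iSup₂_le fun i _ => hm i)
    (hf.mono (biSup_mono fun _ hi => hKJ hi)) hfi

theorem condExp_biSup_ae_eq_zero_of_notMem (hm : ∀ i, m i ≤ m₀) {J : Finset ι} {i : ι}
    (hiJ : i ∉ J) {f : Ω → E} (hf : μ[f | ⨆ (j) (_ : j ≠ i), m j] =ᵐ[μ] 0) :
    μ[f | ⨆ j ∈ J, m j] =ᵐ[μ] 0 :=
  condExp_ae_eq_zero_of_le (biSup_mono fun _ hj => ne_of_mem_of_not_mem hj hiJ)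
    (iSup₂_le fun j _ => hm j) hf

theorem condExp_biSup_sum_ae_eq_sum_powerset [Fintype ι] [DecidableEq ι]
    (hm : ∀ i, m i ≤ m₀) {F : Finset ι → Ω → E}
    (hF_meas : ∀ K, AEStronglyMeasurable[⨆ i ∈ K, m i] (F K) μ)
    (hF_int : ∀ K, Integrable (F K) μ)
    (hF_vanish : ∀ K, ∀ i ∈ K, μ[F K | ⨆ (j) (_ : j ≠ i), m j] =ᵐ[μ] 0) (J : Finset ι) :
    μ[∑ K, F K | ⨆ i ∈ J, m i] =ᵐ[μ] ∑ K ∈ J.powerset, F K := by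
  rw [← Finset.filter_subset_univ]
  refine condExp_finsetSum_ae_eq_sum_filter _ (fun K _ => hF_int K)
    (fun K _ hKJ => condExp_biSup_ae_eq_self_of_subset hm hKJ (hF_meas K) (hF_int K))
    fun K _ hKJ => ?_
  obtain ⟨i, hiK, hiJ⟩ := Finset.not_subset.mp hKJ
  exact condExp_biSup_ae_eq_zero_of_notMem hm hiJ (hF_vanish K i hiK)

end biSup

end MeasureTheory

theorem anova_condexp_eq_partial_sum_general
    {Ω : Type*} [MeasurableSpace Ω] (μ : Measure Ω) [IsProbabilityMeasure μ]
    {N n : ℕ} {𝒳 : Fin N → Type*} [∀ i, MeasurableSpace (𝒳 i)]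
    (X : ∀ i, Ω → 𝒳 i) (hX : ∀ i, Measurable (X i))
    (f : (∀ i, 𝒳 i) → EuclideanSpace ℝ (Fin n))
    (F : Finset (Fin N) → Ω → EuclideanSpace ℝ (Fin n))
    (hF : IsANOVADecomp μ X (fun ω => f (fun i => X i ω)) F) :
    ∀ J : Finset (Fin N),
      μ[(fun ω => f (fun i => X i ω)) | ⨆ i ∈ J, MeasurableSpace.comap (X i) inferInstance]
        =ᵐ[μ] fun ω => ∑ K ∈ J.powerset, F K ω := by
  intro J
  obtain ⟨hF_meas, hF_L2, hF_vanish, hF_sum⟩ := hF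
  rw [← Finset.sum_fn] at hF_sum ⊢
  exact (condExp_congr_ae hF_sum).trans <|
    condExp_biSup_sum_ae_eq_sum_powerset (fun i => (hX i).comap_le) hF_meas
      (fun K => (hF_L2 K).integrable one_le_two) hF_vanish J

/-- The conditional expectation of `f(X)` given the subvector `X_J` equals the sum of the
ANOVA components over all subsets `K ⊆ J`, almost surely. -/
theorem anova_condexp_eq_partial_sum
    {Ω : Type*} [MeasurableSpace Ω] (μ : Measure Ω) [IsProbabilityMeasure μ]
    {N n : ℕ} {𝒳 : Fin N → Type*} [∀ i, MeasurableSpace (𝒳 i)]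
    (X : ∀ i, Ω → 𝒳 i) (hX : ∀ i, Measurable (X i))
    (hindep : iIndepFun X μ)
    (f : (∀ i, 𝒳 i) → EuclideanSpace ℝ (Fin n)) (hf : Measurable f)
    (hf2 : MemLp (fun ω => f (fun i => X i ω)) 2 μ)
    (F : Finset (Fin N) → Ω → EuclideanSpace ℝ (Fin n))
    (hF : IsANOVADecomp μ X (fun ω => f (fun i => X i ω)) F) :
    ∀ J : Finset (Fin N),
      μ[(fun ω => f (fun i => X i ω)) | ⨆ i ∈ J, MeasurableSpace.comap (X i) inferInstance]
        =ᵐ[μ] fun ω => ∑ K ∈ J.powerset, F K ω :=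
  anova_condexp_eq_partial_sum_general μ X hX f F hF
end

section
/- Let X_1, X_1', X_2 be mutually independent random variables with X_1' having the same distribution as X_1, and let f be measurable with f(X_1,X_2) a square-integrable real random variable. Then the symmetrized total-sensitivity-index estimator is unbiased: E[(1/2) * (f(X_1,X_2) - f(X_1',X_2))^2] = E[f(X_1,X_2)^2] - E[(E(f(X_1,X_2)|X_2))^2], the right hand side being the total sensitivity index V_1^tot of f(X_1,X_2) with respect to its first argument. -/
/-!
Independence makes the joint law of `((X₁, X₁'), X₂)` the product `(ν ⊗ ν) ⊗ ρ`, with `ν` the law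
of `X₁` and `ρ` that of `X₂`, so everything becomes an integral against product measures.
Expanding the square, each squared term integrates to `E[f(X₁,X₂)²]`, and by Fubini the cross term
integrates to `∫ (∫ f(x,z) dν(x))² dρ(z)`. Since `X₁` is independent of `X₂`,
`E(f(X₁,X₂) | X₂) = ∫ f(x, X₂) dν(x)`, so this is `E[(E(f(X₁,X₂) | X₂))²]`.
-/

open MeasureTheory ProbabilityTheory

section ProductMeasure

variable {α β : Type*} [MeasurableSpace α] [MeasurableSpace β] {ν : Measure α} {ρ : Measure β}

lemma measurePreserving_fst_fst_snd [IsProbabilityMeasure ν] [SFinite ρ] :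
    MeasurePreserving (fun p : (α × α) × β => (p.1.1, p.2)) ((ν.prod ν).prod ρ) (ν.prod ρ) :=
  measurePreserving_fst.prod (.id ρ)

lemma measurePreserving_snd_fst_snd [IsProbabilityMeasure ν] [SFinite ρ] :
    MeasurePreserving (fun p : (α × α) × β => (p.1.2, p.2)) ((ν.prod ν).prod ρ) (ν.prod ρ) :=
  measurePreserving_snd.prod (.id ρ)

lemma integral_mul_fst_snd_prod_eq_integral_sq_integral [SFinite ν] [SFinite ρ]
    {f : α × β → ℝ}
    (hf : Integrable (fun p : (α × α) × β => f (p.1.1, p.2) * f (p.1.2, p.2)) ((ν.prod ν).prod ρ)) :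
    ∫ p, f (p.1.1, p.2) * f (p.1.2, p.2) ∂((ν.prod ν).prod ρ) = ∫ z, (∫ x, f (x, z) ∂ν) ^ 2 ∂ρ := by
  rw [integral_prod_symm _ hf]
  congr 1 with z
  rw [sq, integral_prod_mul (fun x => f (x, z)) (fun y => f (y, z))]

theorem integral_half_sq_sub_prod_eq [IsProbabilityMeasure ν] [SFinite ρ] {f : α × β → ℝ}
    (hf : MemLp f 2 (ν.prod ρ)) :
    ∫ p, (1 / 2 : ℝ) * (f (p.1.1, p.2) - f (p.1.2, p.2)) ^ 2 ∂((ν.prod ν).prod ρ)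
      = ∫ p, f p ^ 2 ∂(ν.prod ρ) - ∫ z, (∫ x, f (x, z) ∂ν) ^ 2 ∂ρ := by
  have ha := hf.comp_measurePreserving measurePreserving_fst_fst_snd
  have hb := hf.comp_measurePreserving measurePreserving_snd_fst_snd
  have hab : Integrable (fun p : (α × α) × β => f (p.1.1, p.2) * f (p.1.2, p.2))
      ((ν.prod ν).prod ρ) := ha.integrable_mul hb
  have haa : Integrable (fun p : (α × α) × β => (1 / 2 : ℝ) * f (p.1.1, p.2) ^ 2)
      ((ν.prod ν).prod ρ) := ha.integrable_sq.const_mul _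
  have hbb : Integrable (fun p : (α × α) × β => (1 / 2 : ℝ) * f (p.1.2, p.2) ^ 2)
      ((ν.prod ν).prod ρ) := hb.integrable_sq.const_mul _
  have hsq {g : (α × α) × β → α × β} (hg : MeasurePreserving g ((ν.prod ν).prod ρ) (ν.prod ρ)) :
      ∫ p, f (g p) ^ 2 ∂((ν.prod ν).prod ρ) = ∫ p, f p ^ 2 ∂(ν.prod ρ) := by
    have hf2 := hf.aestronglyMeasurable.pow 2
    rw [← hg.map_eq] at hf2 ⊢
    exact (integral_map hg.aemeasurable hf2).symm
  calc ∫ p, (1 / 2 : ℝ) * (f (p.1.1, p.2) - f (p.1.2, p.2)) ^ 2 ∂((ν.prod ν).prod ρ)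
      = ∫ p, ((1 / 2 : ℝ) * f (p.1.1, p.2) ^ 2 + (1 / 2 : ℝ) * f (p.1.2, p.2) ^ 2)
          - f (p.1.1, p.2) * f (p.1.2, p.2) ∂((ν.prod ν).prod ρ) := by
        congr 1 with p; ring
    _ = ∫ p, ((1 / 2 : ℝ) * f (p.1.1, p.2) ^ 2 + (1 / 2 : ℝ) * f (p.1.2, p.2) ^ 2)
          ∂((ν.prod ν).prod ρ) - ∫ p, f (p.1.1, p.2) * f (p.1.2, p.2) ∂((ν.prod ν).prod ρ) :=
        integral_sub (haa.add hbb) hab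
    _ = (1 / 2 : ℝ) * ∫ p, f (p.1.1, p.2) ^ 2 ∂((ν.prod ν).prod ρ)
          + (1 / 2 : ℝ) * ∫ p, f (p.1.2, p.2) ^ 2 ∂((ν.prod ν).prod ρ)
          - ∫ p, f (p.1.1, p.2) * f (p.1.2, p.2) ∂((ν.prod ν).prod ρ) := by
        rw [integral_add haa hbb, integral_const_mul, integral_const_mul]
    _ = _ := by
        rw [hsq measurePreserving_fst_fst_snd, hsq measurePreserving_snd_fst_snd,
          integral_mul_fst_snd_prod_eq_integral_sq_integral hab]
        ring

end ProductMeasure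

theorem condExp_comap_ae_eq_integral_of_indepFun {Ω α β E : Type*} [MeasurableSpace Ω]
    [MeasurableSpace α] [MeasurableSpace β] [NormedAddCommGroup E] [NormedSpace ℝ E]
    [CompleteSpace E] {μ : Measure Ω} [IsFiniteMeasure μ] {X : Ω → α} {Y : Ω → β}
    (hX : Measurable X) (hY : Measurable Y) (hXY : IndepFun X Y μ) {f : α × β → E}
    (hf : StronglyMeasurable f) (hfi : Integrable (fun ω => f (X ω, Y ω)) μ) :
    μ[fun ω => f (X ω, Y ω) | MeasurableSpace.comap Y inferInstance]
      =ᵐ[μ] fun ω => ∫ x, f (x, Y ω) ∂(μ.map X) := by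
  have hlaw := hXY.map_prod_eq_prod_map_map hX.aemeasurable hY.aemeasurable
  have hfi' : Integrable f ((μ.map X).prod (μ.map Y)) := by
    rwa [← hlaw, integrable_map_measure hf.aestronglyMeasurable (hX.prodMk hY).aemeasurable]
  set g := fun y => ∫ x, f (x, y) ∂(μ.map X)
  have hg : StronglyMeasurable g := hf.integral_prod_left'
  have hgi : Integrable (fun ω => g (Y ω)) μ :=
    (integrable_map_measure hg.aestronglyMeasurable hY.aemeasurable).mp hfi'.integral_prod_right
  refine (ae_eq_condExp_of_forall_setIntegral_eq hY.comap_le hfi (fun _ _ _ => hgi.integrableOn)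
    ?_ (hg.comp_measurable (comap_measurable Y)).aestronglyMeasurable).symm
  rintro _ ⟨t, ht, rfl⟩ -
  calc ∫ ω in Y ⁻¹' t, g (Y ω) ∂μ = ∫ y in t, g y ∂(μ.map Y) :=
        (setIntegral_map ht hg.aestronglyMeasurable hY.aemeasurable).symm
    _ = ∫ p in Set.univ ×ˢ t, f p ∂((μ.map X).prod (μ.map Y)) := by
        rw [← Measure.prod_restrict, Measure.restrict_univ,
          integral_prod_symm _ (by
            simpa only [← Measure.prod_restrict, Measure.restrict_univ]
              using hfi'.restrict (s := Set.univ ×ˢ t))]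
    _ = ∫ ω in Y ⁻¹' t, f (X ω, Y ω) ∂μ := by
        rw [← hlaw, setIntegral_map (MeasurableSet.univ.prod ht) hf.aestronglyMeasurable
          (hX.prodMk hY).aemeasurable, Set.mk_preimage_prod, Set.preimage_univ, Set.univ_inter]

/-- Unbiasedness of the symmetrized estimator of the total sensitivity index: for `X₁, X₁', X₂`
mutually independent with `X₁' ~ X₁` and `f(X₁,X₂)` square-integrable,
`E[(1/2)(f(X₁,X₂) - f(X₁',X₂))²] = E[f(X₁,X₂)²] - E[(E(f(X₁,X₂)|X₂))²] = V₁ᵗᵒᵗ`. -/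
theorem symmetrized_total_index_estimator_unbiased
    {Ω α β : Type*} [MeasurableSpace Ω] [MeasurableSpace α] [MeasurableSpace β]
    (μ : Measure Ω) [IsProbabilityMeasure μ]
    (X1 X1' : Ω → α) (X2 : Ω → β)
    (hX1 : Measurable X1) (hX1' : Measurable X1') (hX2 : Measurable X2)
    (h11 : IndepFun X1 X1' μ)
    (h12 : IndepFun (fun ω => (X1 ω, X1' ω)) X2 μ)
    (hid : IdentDistrib X1' X1 μ μ)
    (f : α × β → ℝ) (hf : Measurable f)
    (hf2 : MemLp (fun ω => f (X1 ω, X2 ω)) 2 μ) :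
    ∫ ω, (1 / 2 : ℝ) * (f (X1 ω, X2 ω) - f (X1' ω, X2 ω)) ^ 2 ∂μ
      = (∫ ω, (f (X1 ω, X2 ω)) ^ 2 ∂μ)
        - ∫ ω, ((μ[(fun ω' => f (X1 ω', X2 ω')) | MeasurableSpace.comap X2 inferInstance]) ω) ^ 2 ∂μ := by
  have : IsProbabilityMeasure (μ.map X1) := Measure.isProbabilityMeasure_map hX1.aemeasurable
  have hX12 : IndepFun X1 X2 μ := h12.comp measurable_fst measurable_id
  have hlaw12 : μ.map (fun ω => (X1 ω, X2 ω)) = (μ.map X1).prod (μ.map X2) :=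
    hX12.map_prod_eq_prod_map_map hX1.aemeasurable hX2.aemeasurable
  have hlaw : μ.map (fun ω => ((X1 ω, X1' ω), X2 ω))
      = ((μ.map X1).prod (μ.map X1)).prod (μ.map X2) := by
    rw [h12.map_prod_eq_prod_map_map (hX1.prodMk hX1').aemeasurable hX2.aemeasurable,
      h11.map_prod_eq_prod_map_map hX1.aemeasurable hX1'.aemeasurable, hid.map_eq]
  have hfL2 : MemLp f 2 ((μ.map X1).prod (μ.map X2)) := by
    rwa [← hlaw12, memLp_map_measure_iff hf.aestronglyMeasurable (hX1.prodMk hX2).aemeasurable]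
  have hce := condExp_comap_ae_eq_integral_of_indepFun hX1 hX2 hX12 hf.stronglyMeasurable
    (hf2.integrable one_le_two)
  calc _ = ∫ p, (1 / 2 : ℝ) * (f (p.1.1, p.2) - f (p.1.2, p.2)) ^ 2
        ∂(((μ.map X1).prod (μ.map X1)).prod (μ.map X2)) := by
        rw [← hlaw, integral_map ((hX1.prodMk hX1').prodMk hX2).aemeasurable (by fun_prop)]
    _ = _ := integral_half_sq_sub_prod_eq hfL2
    _ = _ := by
        congr 1
        · rw [← hlaw12, integral_map (hX1.prodMk hX2).aemeasurable (by fun_prop)]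
        · rw [integral_map hX2.aemeasurable
            (hf.stronglyMeasurable.integral_prod_left'.measurable.pow_const 2).aestronglyMeasurable]
          exact integral_congr_ae (hce.symm.fun_comp (· ^ 2))
end

section
/- Let X_1, X_2, X_3 be mutually independent random variables and g measurable such that g(X_1,X_2,X_3) has finite fourth moment. Let Y_i[j], for i in {1,2,3} and j in {0,1}, be mutually independent random variables with Y_i[j] distributed as X_i, and write g[i][j][k] = g(Y_1[i], Y_2[j], Y_3[k]) for i,j,k in {0,1}. For i in {0,1} set B[i] = g[1-i][i][0] - g[i][i][0], C[i] = g[1-i][1-i][1] - g[i][1-i][1], and A[i] = B[i] * C[i]. Then Cov(A[0], A[1]) >= 0. -/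
/-!
Put `a = (Y₁[0], Y₁[1])` and `K (a, b, c) = g (a.2, b, c) - g (a.1, b, c)`, so that
`A[0] = K (a, b₀, c₀) K (a, b₁, c₁)` and `A[1] = K (a, b₁, c₀) K (a, b₀, c₁)`.
Given `a`, both `A[0]` and `A[1]` have conditional mean `θ(a)²` with `θ(a) = E[K (a, ·, ·)]`,
while `E[A[0] A[1] | a]` is the fourth power of the box norm of `K (a, ·, ·)`, which is at
least `θ(a)⁴` by Cauchy–Schwarz applied twice. Hence
`E[A[0] A[1]] ≥ E[θ⁴] ≥ E[θ²]² = E[A[0]] E[A[1]]`.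
-/

open MeasureTheory ProbabilityTheory
open scoped ENNReal

instance ENNReal.HolderTriple.instFourFourTwo : ENNReal.HolderTriple 4 4 2 where
  inv_add_inv_eq_inv := by
    rw [← two_mul, show (4 : ℝ≥0∞) = 2 * 2 by norm_num, ENNReal.mul_inv (by simp) (by simp),
      ← mul_assoc, ENNReal.mul_inv_cancel (by simp) (by simp), one_mul]

theorem sq_integral_le_integral_sq {Ω : Type*} [MeasurableSpace Ω] {μ : Measure Ω}
    [IsProbabilityMeasure μ] {f : Ω → ℝ} (hf : MemLp f 2 μ) :
    (∫ ω, f ω ∂μ) ^ 2 ≤ ∫ ω, f ω ^ 2 ∂μ := by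
  have := variance_nonneg f μ
  rw [variance_eq_sub hf] at this
  simpa [sub_nonneg] using this

theorem MeasureTheory.MemLp.integrable_mul_mul_mul {Ω : Type*} [MeasurableSpace Ω]
    {μ : Measure Ω} {f₁ f₂ f₃ f₄ : Ω → ℝ} (h₁ : MemLp f₁ 4 μ) (h₂ : MemLp f₂ 4 μ)
    (h₃ : MemLp f₃ 4 μ) (h₄ : MemLp f₄ 4 μ) :
    Integrable (fun ω => f₁ ω * f₂ ω * (f₃ ω * f₄ ω)) μ :=
  (h₂.mul' h₁ (r := 2)).integrable_mul (h₄.mul' h₃ (r := 2))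

theorem MeasureTheory.MemLp.prod_right_ae {α β E : Type*} [MeasurableSpace α]
    [MeasurableSpace β] [NormedAddCommGroup E] {μ : Measure α} {ν : Measure β} [SFinite μ]
    [SFinite ν] {f : α × β → E} {p : ℝ≥0∞} (hf : MemLp f p (μ.prod ν)) (hp₀ : p ≠ 0)
    (hp : p ≠ ∞) : ∀ᵐ x ∂μ, MemLp (fun y => f (x, y)) p ν := by
  have hint := (integrable_norm_rpow_iff hf.1 hp₀ hp).2 hf
  filter_upwards [hint.prod_right_ae, hf.1.prodMk_left] with x hx hxm
  exact (integrable_norm_rpow_iff hxm hp₀ hp).1 hx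

section ProdProdProdComm

variable {α β γ δ : Type*} [MeasurableSpace α] [MeasurableSpace β] [MeasurableSpace γ]
  [MeasurableSpace δ]

variable (α β γ δ) in
def MeasurableEquiv.prodProdProdComm : (α × β) × γ × δ ≃ᵐ (α × γ) × β × δ :=
  prodAssoc.trans <| (prodCongr (refl α) <|
    prodAssoc.symm.trans <| (prodCongr prodComm (refl δ)).trans prodAssoc).trans prodAssoc.symm

variable (μa : Measure α) (μb : Measure β) (μc : Measure γ) (μd : Measure δ)
  [SFinite μa] [SFinite μb] [SFinite μc] [SFinite μd]

theorem MeasureTheory.measurePreserving_prodProdProdComm :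
    MeasurePreserving (MeasurableEquiv.prodProdProdComm α β γ δ)
      ((μa.prod μb).prod (μc.prod μd)) ((μa.prod μc).prod (μb.prod μd)) :=
  (measurePreserving_prodAssoc _ _ _).trans <|
    ((MeasurePreserving.id μa).prod <| (measurePreserving_prodAssoc _ _ _).symm.trans <|
      (Measure.measurePreserving_swap.prod (MeasurePreserving.id μd)).trans
        (measurePreserving_prodAssoc _ _ _)).trans (measurePreserving_prodAssoc _ _ _).symm

theorem integral_mul_prodProdProdComm (k : α × γ → ℝ) (l : β × δ → ℝ) :
    ∫ q, k (q.1.1, q.2.1) * l (q.1.2, q.2.2) ∂((μa.prod μb).prod (μc.prod μd)) =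
      (∫ x, k x ∂(μa.prod μc)) * ∫ y, l y ∂(μb.prod μd) := by
  rw [← integral_prod_mul, ← (measurePreserving_prodProdProdComm μa μb μc μd).integral_comp']
  rfl

end ProdProdProdComm

section BoxProduct

variable {A B C : Type*}

/-- `∫ boxProduct k` is the fourth power of the box (Gowers) norm of `k`. -/
def boxProduct (k : B × C → ℝ) (q : (B × B) × C × C) : ℝ :=
  k (q.1.1, q.2.1) * k (q.1.2, q.2.2) * (k (q.1.2, q.2.1) * k (q.1.1, q.2.2))

theorem integral_boxProduct_prodMk [MeasurableSpace C] {νC : Measure C} [SFinite νC]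
    (k : B × C → ℝ) (b : B × B) :
    ∫ c, boxProduct k (b, c) ∂(νC.prod νC) = (∫ c, k (b.1, c) * k (b.2, c) ∂νC) ^ 2 := by
  have h (c : C × C) : boxProduct k (b, c) =
      k (b.1, c.1) * k (b.2, c.1) * (k (b.2, c.2) * k (b.1, c.2)) := by
    unfold boxProduct; ring
  simp_rw [h, integral_prod_mul (fun c => k (b.1, c) * k (b.2, c))
    (fun c => k (b.2, c) * k (b.1, c)), mul_comm (k (b.2, _)), sq]

variable [MeasurableSpace A] [MeasurableSpace B] [MeasurableSpace C]
  {νA : Measure A} {νB : Measure B} {νC : Measure C}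

theorem integral_mul_cross_fiberwise [SFinite νA] [SFinite νB] [SFinite νC]
    (K : A × B × C → ℝ) :
    ∫ p, K (p.1, p.2.1.2, p.2.2.1) * K (p.1, p.2.1.1, p.2.2.2)
        ∂(νA.prod ((νB.prod νB).prod (νC.prod νC))) =
      ∫ p, K (p.1, p.2.1.1, p.2.2.1) * K (p.1, p.2.1.2, p.2.2.2)
        ∂(νA.prod ((νB.prod νB).prod (νC.prod νC))) := by
  have hswap : MeasurePreserving
      (MeasurableEquiv.prodCongr (.refl A) (.prodCongr (.refl (B × B)) .prodComm))
      (νA.prod ((νB.prod νB).prod (νC.prod νC))) (νA.prod ((νB.prod νB).prod (νC.prod νC))) :=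
    (MeasurePreserving.id νA).prod ((MeasurePreserving.id _).prod Measure.measurePreserving_swap)
  rw [← hswap.integral_comp']
  exact integral_congr_ae (ae_of_all _ fun p => mul_comm _ _)

variable [IsProbabilityMeasure νB] [IsProbabilityMeasure νC]

theorem integrable_boxProduct {k : B × C → ℝ} (hk : MemLp k 4 (νB.prod νC)) :
    Integrable (boxProduct k) ((νB.prod νB).prod (νC.prod νC)) :=
  MemLp.integrable_mul_mul_mul
    (hk.comp_measurePreserving (measurePreserving_fst.prod measurePreserving_fst))
    (hk.comp_measurePreserving (measurePreserving_snd.prod measurePreserving_snd))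
    (hk.comp_measurePreserving (measurePreserving_snd.prod measurePreserving_fst))
    (hk.comp_measurePreserving (measurePreserving_fst.prod measurePreserving_snd))

theorem integral_pow_four_le_integral_boxProduct {k : B × C → ℝ}
    (hk : MemLp k 4 (νB.prod νC)) :
    (∫ x, k x ∂(νB.prod νC)) ^ 4 ≤ ∫ q, boxProduct k q ∂((νB.prod νB).prod (νC.prod νC)) := by
  set M : B × B → ℝ := fun b => ∫ c, k (b.1, c) * k (b.2, c) ∂νC
  set ζ : C → ℝ := fun c => ∫ b, k (b, c) ∂νB
  have hk1 : Integrable k (νB.prod νC) := hk.integrable (by norm_num)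
  have hk2 : MemLp k 2 (νB.prod νC) := hk.mono_exponent (by norm_num)
  have hG : Integrable (fun p : (B × B) × C => k (p.1.1, p.2) * k (p.1.2, p.2))
      ((νB.prod νB).prod νC) :=
    (hk2.comp_measurePreserving (measurePreserving_fst.prod (.id νC))).integrable_mul
      (hk2.comp_measurePreserving (measurePreserving_snd.prod (.id νC)))
  have hζ_sq (c : C) : ∫ b, k (b.1, c) * k (b.2, c) ∂(νB.prod νB) = ζ c ^ 2 := by
    rw [integral_prod_mul (fun b => k (b, c)) (fun b => k (b, c)), sq]
  have hM : MemLp M 2 (νB.prod νB) :=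
    (memLp_two_iff_integrable_sq hG.integral_prod_left.aestronglyMeasurable).2 <|
      (integrable_boxProduct hk).integral_prod_left.congr
        (ae_of_all _ (integral_boxProduct_prodMk k))
  have hζ : MemLp ζ 2 νC :=
    (memLp_two_iff_integrable_sq hk1.integral_prod_right.aestronglyMeasurable).2 <|
      hG.integral_prod_right.congr (ae_of_all _ hζ_sq)
  calc (∫ x, k x ∂(νB.prod νC)) ^ 4 = ((∫ c, ζ c ∂νC) ^ 2) ^ 2 := by
        rw [integral_prod_symm _ hk1]; ring
    _ ≤ (∫ c, ζ c ^ 2 ∂νC) ^ 2 :=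
        pow_le_pow_left₀ (sq_nonneg _) (sq_integral_le_integral_sq hζ) 2
    _ = (∫ b, M b ∂(νB.prod νB)) ^ 2 := by
        rw [integral_integral_swap hG]; simp_rw [hζ_sq]
    _ ≤ ∫ b, M b ^ 2 ∂(νB.prod νB) := sq_integral_le_integral_sq hM
    _ = ∫ q, boxProduct k q ∂((νB.prod νB).prod (νC.prod νC)) := by
        rw [integral_prod _ (integrable_boxProduct hk)]
        simp_rw [integral_boxProduct_prodMk]
        rfl

variable [IsProbabilityMeasure νA]

theorem integrable_boxProduct_fiberwise {K : A × B × C → ℝ}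
    (hK : MemLp K 4 (νA.prod (νB.prod νC))) :
    Integrable (fun p => boxProduct (fun x => K (p.1, x)) p.2)
      (νA.prod ((νB.prod νB).prod (νC.prod νC))) :=
  MemLp.integrable_mul_mul_mul
    (hK.comp_measurePreserving ((MeasurePreserving.id νA).prod
      (measurePreserving_fst.prod measurePreserving_fst)))
    (hK.comp_measurePreserving ((MeasurePreserving.id νA).prod
      (measurePreserving_snd.prod measurePreserving_snd)))
    (hK.comp_measurePreserving ((MeasurePreserving.id νA).prod
      (measurePreserving_snd.prod measurePreserving_fst)))
    (hK.comp_measurePreserving ((MeasurePreserving.id νA).prod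
      (measurePreserving_fst.prod measurePreserving_snd)))

theorem integral_mul_diag_fiberwise {K : A × B × C → ℝ}
    (hK : MemLp K 2 (νA.prod (νB.prod νC))) :
    ∫ p, K (p.1, p.2.1.1, p.2.2.1) * K (p.1, p.2.1.2, p.2.2.2)
        ∂(νA.prod ((νB.prod νB).prod (νC.prod νC))) =
      ∫ a, (∫ x, K (a, x) ∂(νB.prod νC)) ^ 2 ∂νA := by
  have hint : Integrable (fun p : A × (B × B) × C × C =>
      K (p.1, p.2.1.1, p.2.2.1) * K (p.1, p.2.1.2, p.2.2.2))
      (νA.prod ((νB.prod νB).prod (νC.prod νC))) :=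
    (hK.comp_measurePreserving ((MeasurePreserving.id νA).prod
      (measurePreserving_fst.prod measurePreserving_fst))).integrable_mul
      (hK.comp_measurePreserving ((MeasurePreserving.id νA).prod
        (measurePreserving_snd.prod measurePreserving_snd)))
  have hslice (a : A) : ∫ q, K (a, q.1.1, q.2.1) * K (a, q.1.2, q.2.2)
      ∂((νB.prod νB).prod (νC.prod νC)) = (∫ x, K (a, x) ∂(νB.prod νC)) ^ 2 := by
    rw [integral_mul_prodProdProdComm _ _ _ _ (fun x => K (a, x)) (fun x => K (a, x)), sq]
  rw [integral_prod _ hint]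
  simp_rw [hslice]

theorem integral_mul_integral_le_integral_boxProduct_fiberwise {K : A × B × C → ℝ}
    (hK : MemLp K 4 (νA.prod (νB.prod νC))) :
    (∫ p, K (p.1, p.2.1.1, p.2.2.1) * K (p.1, p.2.1.2, p.2.2.2)
        ∂(νA.prod ((νB.prod νB).prod (νC.prod νC)))) *
      (∫ p, K (p.1, p.2.1.2, p.2.2.1) * K (p.1, p.2.1.1, p.2.2.2)
        ∂(νA.prod ((νB.prod νB).prod (νC.prod νC)))) ≤
    ∫ p, boxProduct (fun x => K (p.1, x)) p.2 ∂(νA.prod ((νB.prod νB).prod (νC.prod νC))) := by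
  set θ : A → ℝ := fun a => ∫ x, K (a, x) ∂(νB.prod νC)
  have hbox := integrable_boxProduct_fiberwise hK
  have hθ4 : ∀ᵐ a ∂νA,
      θ a ^ 4 ≤ ∫ q, boxProduct (fun x => K (a, x)) q ∂((νB.prod νB).prod (νC.prod νC)) := by
    filter_upwards [hK.prod_right_ae (by norm_num) (by norm_num)] with a ha
    exact integral_pow_four_le_integral_boxProduct ha
  have hθ4_int : Integrable (fun a => θ a ^ 4) νA :=
    hbox.integral_prod_left.mono' (hK.1.integral_prod_right'.pow 4)
      (hθ4.mono fun a ha => by rwa [Real.norm_of_nonneg (by positivity)])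
  have hθ2 : MemLp (fun a => θ a ^ 2) 2 νA :=
    (memLp_two_iff_integrable_sq (f := fun a => θ a ^ 2)
      (hK.1.integral_prod_right'.pow 2)).2 <| by simpa only [← pow_mul] using hθ4_int
  rw [integral_mul_cross_fiberwise, integral_mul_diag_fiberwise (hK.mono_exponent (by norm_num)),
    ← sq]
  calc (∫ a, θ a ^ 2 ∂νA) ^ 2 ≤ ∫ a, (θ a ^ 2) ^ 2 ∂νA := sq_integral_le_integral_sq hθ2
    _ = ∫ a, θ a ^ 4 ∂νA := by simp_rw [← pow_mul]
    _ ≤ ∫ a, ∫ q, boxProduct (fun x => K (a, x)) q ∂((νB.prod νB).prod (νC.prod νC)) ∂νA :=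
        integral_mono_ae hθ4_int hbox.integral_prod_left hθ4
    _ = _ := (integral_prod _ hbox).symm

end BoxProduct

section Laws

variable {Ω α β γ : Type*} [MeasurableSpace Ω] [MeasurableSpace α] [MeasurableSpace β]
  [MeasurableSpace γ] {μ : Measure Ω} [IsFiniteMeasure μ]

theorem ProbabilityTheory.IndepFun.map_prodMk_eq_prod_of_identDistrib {Y₀ Y₁ X : Ω → α}
    (h : IndepFun Y₀ Y₁ μ) (h₀ : IdentDistrib Y₀ X μ μ) (h₁ : IdentDistrib Y₁ X μ μ) :
    μ.map (fun ω => (Y₀ ω, Y₁ ω)) = (μ.map X).prod (μ.map X) := by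
  rw [(indepFun_iff_map_prod_eq_prod_map_map h₀.aemeasurable_fst h₁.aemeasurable_fst).1 h,
    h₀.map_eq, h₁.map_eq]

theorem ProbabilityTheory.IndepFun.map_prodMk_prodMk_eq_prod {f : Ω → α} {g : Ω → β}
    {h : Ω → γ} (hf : AEMeasurable f μ) (hg : AEMeasurable g μ) (hh : AEMeasurable h μ)
    (hfgh : IndepFun f (fun ω => (g ω, h ω)) μ) (hgh : IndepFun g h μ) :
    μ.map (fun ω => (f ω, g ω, h ω)) = (μ.map f).prod ((μ.map g).prod (μ.map h)) := by
  rw [(indepFun_iff_map_prod_eq_prod_map_map hf (hg.prodMk hh)).1 hfgh,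
    (indepFun_iff_map_prod_eq_prod_map_map hg hh).1 hgh]

end Laws

theorem cov_symmetrized_terms_nonneg_general
    {Ω α β γ : Type*} [MeasurableSpace Ω]
    [MeasurableSpace α] [MeasurableSpace β] [MeasurableSpace γ]
    (μ : Measure Ω) [IsProbabilityMeasure μ]
    (X1 : Ω → α) (X2 : Ω → β) (X3 : Ω → γ)
    (hX23 : IndepFun X2 X3 μ)
    (hX123 : IndepFun X1 (fun ω => (X2 ω, X3 ω)) μ)
    (g : α × β × γ → ℝ) (hg : Measurable g)
    (hg4 : MemLp (fun ω => g (X1 ω, X2 ω, X3 ω)) 4 μ)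
    (Y1 : Fin 2 → Ω → α) (Y2 : Fin 2 → Ω → β) (Y3 : Fin 2 → Ω → γ)
    (hY1id : ∀ j, IdentDistrib (Y1 j) X1 μ μ)
    (hY2id : ∀ j, IdentDistrib (Y2 j) X2 μ μ)
    (hY3id : ∀ j, IdentDistrib (Y3 j) X3 μ μ)
    (h1 : IndepFun (Y1 0) (Y1 1) μ)
    (h2 : IndepFun (Y2 0) (Y2 1) μ)
    (h3 : IndepFun (Y3 0) (Y3 1) μ)
    (h23 : IndepFun (fun ω => (Y2 0 ω, Y2 1 ω)) (fun ω => (Y3 0 ω, Y3 1 ω)) μ)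
    (h123 : IndepFun (fun ω => (Y1 0 ω, Y1 1 ω))
        (fun ω => ((Y2 0 ω, Y2 1 ω), (Y3 0 ω, Y3 1 ω))) μ) :
    (∫ ω,
        ((g (Y1 1 ω, Y2 0 ω, Y3 0 ω) - g (Y1 0 ω, Y2 0 ω, Y3 0 ω))
          * (g (Y1 1 ω, Y2 1 ω, Y3 1 ω) - g (Y1 0 ω, Y2 1 ω, Y3 1 ω)))
        * ((g (Y1 0 ω, Y2 1 ω, Y3 0 ω) - g (Y1 1 ω, Y2 1 ω, Y3 0 ω))
          * (g (Y1 0 ω, Y2 0 ω, Y3 1 ω) - g (Y1 1 ω, Y2 0 ω, Y3 1 ω))) ∂μ)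
      - (∫ ω, (g (Y1 1 ω, Y2 0 ω, Y3 0 ω) - g (Y1 0 ω, Y2 0 ω, Y3 0 ω))
          * (g (Y1 1 ω, Y2 1 ω, Y3 1 ω) - g (Y1 0 ω, Y2 1 ω, Y3 1 ω)) ∂μ)
        * (∫ ω, (g (Y1 0 ω, Y2 1 ω, Y3 0 ω) - g (Y1 1 ω, Y2 1 ω, Y3 0 ω))
          * (g (Y1 0 ω, Y2 0 ω, Y3 1 ω) - g (Y1 1 ω, Y2 0 ω, Y3 1 ω)) ∂μ)
      ≥ 0 := by
  have hX1 := (hY1id 0).aemeasurable_snd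
  have hX2 := (hY2id 0).aemeasurable_snd
  have hX3 := (hY3id 0).aemeasurable_snd
  have := Measure.isProbabilityMeasure_map hX1
  have := Measure.isProbabilityMeasure_map hX2
  have := Measure.isProbabilityMeasure_map hX3
  have hgL4 : MemLp g 4 ((μ.map X1).prod ((μ.map X2).prod (μ.map X3))) := by
    rw [← hX123.map_prodMk_prodMk_eq_prod hX1 hX2 hX3 hX23]
    exact (memLp_map_measure_iff hg.aestronglyMeasurable
      (hX1.prodMk (hX2.prodMk hX3))).2 hg4
  set K : (α × α) × β × γ → ℝ := fun p => g (p.1.2, p.2) - g (p.1.1, p.2)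
  have hK : MemLp K 4 (((μ.map X1).prod (μ.map X1)).prod ((μ.map X2).prod (μ.map X3))) :=
    (hgL4.comp_measurePreserving (measurePreserving_snd.prod (.id _))).sub
      (hgL4.comp_measurePreserving (measurePreserving_fst.prod (.id _)))
  have key := integral_mul_integral_le_integral_boxProduct_fiberwise hK
  have hY1 := (hY1id 0).aemeasurable_fst.prodMk (hY1id 1).aemeasurable_fst
  have hY2 := (hY2id 0).aemeasurable_fst.prodMk (hY2id 1).aemeasurable_fst
  have hY3 := (hY3id 0).aemeasurable_fst.prodMk (hY3id 1).aemeasurable_fst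
  have hW := hY1.prodMk (hY2.prodMk hY3)
  rw [← h1.map_prodMk_eq_prod_of_identDistrib (hY1id 0) (hY1id 1),
    ← h2.map_prodMk_eq_prod_of_identDistrib (hY2id 0) (hY2id 1),
    ← h3.map_prodMk_eq_prod_of_identDistrib (hY3id 0) (hY3id 1),
    ← h123.map_prodMk_prodMk_eq_prod hY1 hY2 hY3 h23,
    integral_map hW (by fun_prop), integral_map hW (by fun_prop),
    integral_map hW (by unfold boxProduct; fun_prop)] at key
  rw [ge_iff_le, sub_nonneg]
  convert key using 3 <;> (try funext ω) <;> simp only [K, boxProduct] <;> ring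

/-- Nonnegativity of the covariance of the two terms of the symmetrized main-index estimator:
with `X₁, X₂, X₃` mutually independent, `g(X₁,X₂,X₃)` having finite fourth moment, and
`Y_i[j]` (for `i ∈ {1,2,3}`, `j ∈ {0,1}`) mutually independent with `Y_i[j] ~ X_i`, writing
`g[i][j][k] = g(Y₁[i], Y₂[j], Y₃[k])`, `B[i] = g[1-i][i][0] - g[i][i][0]`,
`C[i] = g[1-i][1-i][1] - g[i][1-i][1]` and `A[i] = B[i]·C[i]`, one has
`Cov(A[0], A[1]) ≥ 0`. -/
theorem cov_symmetrized_terms_nonneg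
    {Ω α β γ : Type*} [MeasurableSpace Ω]
    [MeasurableSpace α] [MeasurableSpace β] [MeasurableSpace γ]
    (μ : Measure Ω) [IsProbabilityMeasure μ]
    (X1 : Ω → α) (X2 : Ω → β) (X3 : Ω → γ)
    (hX1 : Measurable X1) (hX2 : Measurable X2) (hX3 : Measurable X3)
    (hX23 : IndepFun X2 X3 μ)
    (hX123 : IndepFun X1 (fun ω => (X2 ω, X3 ω)) μ)
    (g : α × β × γ → ℝ) (hg : Measurable g)
    (hg4 : MemLp (fun ω => g (X1 ω, X2 ω, X3 ω)) 4 μ)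
    (Y1 : Fin 2 → Ω → α) (Y2 : Fin 2 → Ω → β) (Y3 : Fin 2 → Ω → γ)
    (hY1 : ∀ j, Measurable (Y1 j)) (hY2 : ∀ j, Measurable (Y2 j))
    (hY3 : ∀ j, Measurable (Y3 j))
    (hY1id : ∀ j, IdentDistrib (Y1 j) X1 μ μ)
    (hY2id : ∀ j, IdentDistrib (Y2 j) X2 μ μ)
    (hY3id : ∀ j, IdentDistrib (Y3 j) X3 μ μ)
    (h1 : IndepFun (Y1 0) (Y1 1) μ)
    (h2 : IndepFun (Y2 0) (Y2 1) μ)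
    (h3 : IndepFun (Y3 0) (Y3 1) μ)
    (h23 : IndepFun (fun ω => (Y2 0 ω, Y2 1 ω)) (fun ω => (Y3 0 ω, Y3 1 ω)) μ)
    (h123 : IndepFun (fun ω => (Y1 0 ω, Y1 1 ω))
        (fun ω => ((Y2 0 ω, Y2 1 ω), (Y3 0 ω, Y3 1 ω))) μ) :
    (∫ ω,
        ((g (Y1 1 ω, Y2 0 ω, Y3 0 ω) - g (Y1 0 ω, Y2 0 ω, Y3 0 ω))
          * (g (Y1 1 ω, Y2 1 ω, Y3 1 ω) - g (Y1 0 ω, Y2 1 ω, Y3 1 ω)))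
        * ((g (Y1 0 ω, Y2 1 ω, Y3 0 ω) - g (Y1 1 ω, Y2 1 ω, Y3 0 ω))
          * (g (Y1 0 ω, Y2 0 ω, Y3 1 ω) - g (Y1 1 ω, Y2 0 ω, Y3 1 ω))) ∂μ)
      - (∫ ω, (g (Y1 1 ω, Y2 0 ω, Y3 0 ω) - g (Y1 0 ω, Y2 0 ω, Y3 0 ω))
          * (g (Y1 1 ω, Y2 1 ω, Y3 1 ω) - g (Y1 0 ω, Y2 1 ω, Y3 1 ω)) ∂μ)
        * (∫ ω, (g (Y1 0 ω, Y2 1 ω, Y3 0 ω) - g (Y1 1 ω, Y2 1 ω, Y3 0 ω))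
          * (g (Y1 0 ω, Y2 0 ω, Y3 1 ω) - g (Y1 1 ω, Y2 0 ω, Y3 1 ω)) ∂μ)
      ≥ 0 :=
  cov_symmetrized_terms_nonneg_general μ X1 X2 X3 hX23 hX123 g hg hg4 Y1 Y2 Y3 hY1id hY2id hY3id h1
    h2 h3 h23 h123
end
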